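/- Let Γ ≤ Aff(ℝⁿ) be an n-dimensional crystallographic group with holonomy group F. If the normaliser of F in GLₙ(ℤ) is finite, then the Reidemeister spectrum Spec_R(Γ) = {R(φ) : φ ∈ Aut(Γ)} is a finite subset of ℕ ∪ {∞}. -/

import Mathlib

open Matrix

noncomputable section

@[ext]
structure Aff (n : ℕ) where
  tr : Fin n → ℝ
  lin : GL (Fin n) ℝ

namespace Aff

variable {n : ℕ}

instance : Mul (Aff n) :=
  ⟨fun a b => ⟨a.tr + (a.lin : Matrix (Fin n) (Fin n) ℝ) *ᵥ b.tr, a.lin * b.lin⟩⟩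

instance : One (Aff n) := ⟨⟨0, 1⟩⟩

instance : Inv (Aff n) :=
  ⟨fun a => ⟨((a.lin⁻¹ : GL (Fin n) ℝ) : Matrix (Fin n) (Fin n) ℝ) *ᵥ (-a.tr), a.lin⁻¹⟩⟩

theorem mul_def (a b : Aff n) :
    a * b = ⟨a.tr + (a.lin : Matrix (Fin n) (Fin n) ℝ) *ᵥ b.tr, a.lin * b.lin⟩ := rfl

theorem one_def : (1 : Aff n) = ⟨0, 1⟩ := rfl

theorem inv_def (a : Aff n) :
    a⁻¹ = ⟨((a.lin⁻¹ : GL (Fin n) ℝ) : Matrix (Fin n) (Fin n) ℝ) *ᵥ (-a.tr), a.lin⁻¹⟩ := rfl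

instance : Group (Aff n) where
  mul_assoc a b c := by
    ext i
    · simp [mul_def, Matrix.mulVec_add, Matrix.mulVec_mulVec, add_assoc, Units.val_mul]
    · simp [mul_def, mul_assoc]
  one_mul a := by
    ext i
    · simp [mul_def, one_def]
    · simp [mul_def, one_def]
  mul_one a := by
    ext i
    · simp [mul_def, one_def]
    · simp [mul_def, one_def]
  inv_mul_cancel a := by
    ext i
    · simp [mul_def, inv_def, one_def, Matrix.mulVec_neg]
    · simp [mul_def, inv_def, one_def]

end Aff

/-- The translation subgroup of `Γ` is exactly `ℤⁿ × {Iₙ}`. -/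
def HasIntTranslations {n : ℕ} (Γ : Subgroup (Aff n)) : Prop :=
  ∀ v : Fin n → ℝ, (Aff.mk v 1 ∈ Γ ↔ ∃ z : Fin n → ℤ, v = fun i => (z i : ℝ))

/-- The holonomy group of `Γ`, as the set of linear parts of elements of `Γ`. -/
def holonomy {n : ℕ} (Γ : Subgroup (Aff n)) : Set (GL (Fin n) ℝ) :=
  {D : GL (Fin n) ℝ | ∃ a : Fin n → ℝ, Aff.mk a D ∈ Γ}

/-- `D ∈ GLₙ(ℤ)`: both `D` and `D⁻¹` have integer entries. -/
def IsIntegralGL {n : ℕ} (D : GL (Fin n) ℝ) : Prop :=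
  (∀ i j, ∃ z : ℤ, (D : Matrix (Fin n) (Fin n) ℝ) i j = (z : ℝ)) ∧
  (∀ i j, ∃ z : ℤ, ((D⁻¹ : GL (Fin n) ℝ) : Matrix (Fin n) (Fin n) ℝ) i j = (z : ℝ))

/-- `Γ ≤ Aff(ℝⁿ)` is an `n`-dimensional crystallographic group. -/
def IsCrystallographic {n : ℕ} (Γ : Subgroup (Aff n)) : Prop :=
  HasIntTranslations Γ ∧ (holonomy Γ).Finite ∧ ∀ D ∈ holonomy Γ, IsIntegralGL D

/-- Conjugation by `g` maps `Γ` bijectively onto itself, i.e. `ξ_g` is an automorphism of `Γ`. -/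
def XiIsAut {n : ℕ} (g : Aff n) (Γ : Subgroup (Aff n)) : Prop :=
  ∀ γ : Aff n, γ ∈ Γ ↔ g * γ * g⁻¹ ∈ Γ

def twistedConj {G : Type*} [Group G] (φ : G →* G) (g g' : G) : Prop :=
  ∃ h : G, g = h * g' * (φ h)⁻¹

noncomputable def reidemeisterNumber {G : Type*} [Group G] (φ : G →* G) : ℕ∞ :=
  ENat.card (Quot (twistedConj φ))

noncomputable def reidemeisterSpectrum (G : Type*) [Group G] : Set ℕ∞ :=
  {r : ℕ∞ | ∃ φ : G ≃* G, reidemeisterNumber (φ : G →* G) = r}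

/-- The automorphism `ξ_{(d,D)}` of `Γ`, given by conjugation by `g = (d,D)`. -/
def xi {n : ℕ} (g : Aff n) (Γ : Subgroup (Aff n)) (h : XiIsAut g Γ) : Γ →* Γ where
  toFun x := ⟨g * (x : Aff n) * g⁻¹, (h x).mp x.2⟩
  map_one' := by
    apply Subtype.ext
    show g * ((1 : Γ) : Aff n) * g⁻¹ = ((1 : Γ) : Aff n)
    simp
  map_mul' x y := by
    apply Subtype.ext
    show g * ((x * y : Γ) : Aff n) * g⁻¹ =
      (g * (x : Aff n) * g⁻¹) * (g * (y : Aff n) * g⁻¹)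
    simp only [Subgroup.coe_mul]
    group

/-- `|x|_∞` for an integer `x`. -/
def intAbsInfty (x : ℤ) : ℕ∞ := if x = 0 then ⊤ else (x.natAbs : ℕ∞)

/-- `O(B,b)`: the number of solutions over `ℤ/2ℤ` of `B̄ x = b̄`. -/
noncomputable def Ocount {n : ℕ} (B : Matrix (Fin n) (Fin n) ℤ) (b : Fin n → ℤ) : ℕ :=
  Nat.card {x : Fin n → ZMod 2 // (B.map (Int.cast : ℤ → ZMod 2)) *ᵥ x = fun i => ((b i : ZMod 2))}

/-!
Every automorphism `φ` of `Γ` preserves the lattice `ℤⁿ` of translations, since these are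
exactly the elements commuting with all `|F|`-th powers. Hence `φ` acts on `ℤⁿ` by a matrix
`D_φ ∈ GLₙ(ℤ)` normalising `F`, with `(φ x).lin = D_φ x.lin D_φ⁻¹`, and only finitely many
`D_φ` occur.

If `D_φ = D_φ'`, then `ψ = φ' φ⁻¹` fixes the lattice pointwise, so `tr (ψ x) - tr x` depends
only on `A = x.lin` and is a cocycle `c : F → ℤⁿ`. Averaging `c (A B) = c A + A c B` over `B`
gives `|F| c A = Z - A Z` with `Z = ∑ c`; when `Z = |F| u` with `u ∈ ℤⁿ`, `ψ` is conjugation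
by the translation by `u`. The sum of the translation parts of `φ` on representatives of `F`
changes by exactly `Z` under `φ ↦ ψ φ`, so `D_φ` together with this sum modulo `|F| ℤⁿ` takes
finitely many values and determines `φ` up to an inner automorphism, which does not change
`R(φ)`.
-/

namespace Aff

variable {n : ℕ}

@[simp] lemma mul_tr (a b : Aff n) :
    (a * b).tr = a.tr + (a.lin : Matrix (Fin n) (Fin n) ℝ) *ᵥ b.tr :=
  rfl

@[simp] lemma mul_lin (a b : Aff n) : (a * b).lin = a.lin * b.lin := rfl

def linHom : Aff n →* GL (Fin n) ℝ where
  toFun := lin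
  map_one' := rfl
  map_mul' _ _ := rfl

@[simp] lemma inv_lin (a : Aff n) : a⁻¹.lin = a.lin⁻¹ := map_inv linHom a

def translation (v : Fin n → ℝ) : Aff n := ⟨v, 1⟩

@[simp] lemma translation_tr (v : Fin n → ℝ) : (translation v).tr = v := rfl

@[simp] lemma translation_lin (v : Fin n → ℝ) : (translation v).lin = 1 := rfl

lemma eq_translation_of_lin_eq_one {a : Aff n} (h : a.lin = 1) : a = translation a.tr :=
  Aff.ext rfl h

lemma translation_mul_translation (v w : Fin n → ℝ) :
    translation v * translation w = translation (v + w) := by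
  ext <;> simp

lemma translation_pow (v : Fin n → ℝ) (k : ℕ) :
    translation v ^ k = translation (k • v) := by
  induction k with
  | zero => rw [pow_zero, zero_smul]; rfl
  | succ k ih => rw [pow_succ, ih, translation_mul_translation, succ_nsmul]

lemma conj_translation (g : Aff n) (v : Fin n → ℝ) :
    g * translation v * g⁻¹ = translation ((g.lin : Matrix (Fin n) (Fin n) ℝ) *ᵥ v) := by
  ext <;> simp [inv_def, mulVec_mulVec]

lemma translation_conj (v : Fin n → ℝ) (g : Aff n) :
    translation v * g * (translation v)⁻¹ =
      ⟨v + g.tr - (g.lin : Matrix (Fin n) (Fin n) ℝ) *ᵥ v, g.lin⟩ := by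
  ext <;> simp [inv_def, sub_eq_add_neg, add_assoc, mulVec_neg]

lemma mul_inv_eq_translation {a b : Aff n} (h : a.lin = b.lin) :
    a * b⁻¹ = translation (a.tr - b.tr) := by
  ext <;> simp [inv_def, h, mulVec_mulVec, sub_eq_add_neg]

lemma lin_mulVec_eq_of_commute_translation {g : Aff n} {v : Fin n → ℝ}
    (h : Commute g (translation v)) : (g.lin : Matrix (Fin n) (Fin n) ℝ) *ᵥ v = v := by
  have := congrArg tr h.eq
  simp only [mul_tr, translation_tr, translation_lin, Units.val_one, one_mulVec] at this
  exact add_left_cancel (this.trans (add_comm _ _))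

end Aff

lemma reidemeisterNumber_eq_of_forall_eq_conj {G : Type*} [Group G] {φ φ' : G →* G} (g : G)
    (h : ∀ x, φ' x = g * φ x * g⁻¹) : reidemeisterNumber φ' = reidemeisterNumber φ := by
  refine ENat.card_congr (Quot.congr (Equiv.mulRight g) fun a b => ?_)
  simp only [twistedConj, Equiv.coe_mulRight, h]
  refine exists_congr fun k => ⟨fun hk => ?_, fun hk => ?_⟩
  · rw [hk]; group
  · rw [eq_mul_inv_of_mul_eq hk]; group

lemma reidemeisterSpectrum_finite_of_invariant {G S : Type*} [Group G] (ι : (G ≃* G) → S)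
    (hι : (Set.range ι).Finite)
    (hconj : ∀ φ φ', ι φ = ι φ' → ∃ g, ∀ x, φ' x = g * φ x * g⁻¹) :
    (reidemeisterSpectrum G).Finite := by
  have hfactor : ∀ φ : G ≃* G, reidemeisterNumber (φ : G →* G) =
      reidemeisterNumber ((Function.invFun ι (ι φ) : G ≃* G) : G →* G) := fun φ => by
    obtain ⟨g, hg⟩ := hconj _ _ (Function.invFun_eq ⟨φ, rfl⟩)
    exact reidemeisterNumber_eq_of_forall_eq_conj g hg
  refine (hι.image fun s =>
    reidemeisterNumber ((Function.invFun ι s : G ≃* G) : G →* G)).subset ?_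
  rintro _ ⟨φ, rfl⟩
  exact ⟨ι φ, ⟨φ, rfl⟩, (hfactor φ).symm⟩

namespace Crystallographic

variable {n : ℕ}

def intVec : (Fin n → ℤ) →+ (Fin n → ℝ) :=
  AddMonoidHom.compLeft (Int.castAddHom ℝ) (Fin n)

@[simp] lemma intVec_apply (z : Fin n → ℤ) (i : Fin n) : intVec z i = (z i : ℝ) := rfl

@[simp] lemma intVec_single (j : Fin n) : intVec (Pi.single j 1) = Pi.single j (1 : ℝ) := by
  ext i; by_cases h : i = j <;> simp [h]

def scaledIntLattice (m : ℕ) : AddSubgroup (Fin n → ℝ) := (m • intVec (n := n)).range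

lemma finite_range_mk_add_intVec (m : ℕ) [NeZero m] (c : Fin n → ℝ) :
    (Set.range fun w : Fin n → ℤ =>
      (QuotientAddGroup.mk (c + intVec w) : (Fin n → ℝ) ⧸ scaledIntLattice m)).Finite := by
  refine (Set.finite_range fun t : Fin n → ZMod m =>
    (QuotientAddGroup.mk (c + intVec fun i => ((t i).val : ℤ)) :
      (Fin n → ℝ) ⧸ scaledIntLattice m)).subset ?_
  rintro _ ⟨w, rfl⟩
  refine ⟨fun i => w i, (QuotientAddGroup.eq.2 ⟨fun i => w i / m, ?_⟩)⟩
  ext i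
  have h := congrArg (Int.cast : ℤ → ℝ) (Int.emod_add_mul_ediv (w i) m)
  push_cast at h
  simp only [AddMonoidHom.smul_apply, Pi.smul_apply, intVec_apply, nsmul_eq_mul,
    ZMod.val_intCast, Pi.add_apply, Pi.neg_apply, neg_add_rev, add_neg_add_add_cancel]
  linarith

variable (Γ : Subgroup (Aff n))

def holonomyGroup : Subgroup (GL (Fin n) ℝ) where
  carrier := holonomy Γ
  one_mem' := ⟨0, Γ.one_mem⟩
  mul_mem' := fun ⟨_, ha⟩ ⟨_, hb⟩ => ⟨_, Γ.mul_mem ha hb⟩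
  inv_mem' := fun ⟨_, ha⟩ => ⟨_, Γ.inv_mem ha⟩

def linearPart : Γ →* holonomyGroup Γ :=
  (Aff.linHom.comp Γ.subtype).codRestrict _ fun x => ⟨(x : Aff n).tr, x.2⟩

@[simp] lemma coe_linearPart (x : Γ) : (linearPart Γ x : GL (Fin n) ℝ) = (x : Aff n).lin := rfl

lemma linearPart_surjective : Function.Surjective (linearPart Γ) :=
  fun ⟨_, _, ha⟩ => ⟨⟨_, ha⟩, rfl⟩

def rep : holonomyGroup Γ → Γ := Function.surjInv (linearPart_surjective Γ)

@[simp] lemma linearPart_rep (A : holonomyGroup Γ) : linearPart Γ (rep Γ A) = A :=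
  Function.surjInv_eq _ A

@[simp] lemma rep_lin (A : holonomyGroup Γ) : ((rep Γ A : Γ) : Aff n).lin = A :=
  congrArg Subtype.val (linearPart_rep Γ A)

variable {Γ}

def translationOf (hT : HasIntTranslations Γ) (z : Fin n → ℤ) : Γ :=
  ⟨Aff.translation (intVec z), (hT _).2 ⟨z, rfl⟩⟩

@[simp] lemma coe_translationOf (hT : HasIntTranslations Γ) (z : Fin n → ℤ) :
    (translationOf hT z : Aff n) = Aff.translation (intVec z) := rfl

lemma exists_eq_translationOf (hT : HasIntTranslations Γ) {x : Γ} (hx : (x : Aff n).lin = 1) :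
    ∃ z, x = translationOf hT z := by
  obtain ⟨z, hz⟩ := (hT _).1 (Aff.eq_translation_of_lin_eq_one hx ▸ x.2)
  exact ⟨z, Subtype.ext (Aff.ext hz hx)⟩

lemma commute_of_lin_eq_one {x y : Γ} (hx : (x : Aff n).lin = 1) (hy : (y : Aff n).lin = 1) :
    Commute x y := by
  refine Subtype.ext ?_
  simp only [Subgroup.coe_mul]
  rw [Aff.eq_translation_of_lin_eq_one hx, Aff.eq_translation_of_lin_eq_one hy,
    Aff.translation_mul_translation, Aff.translation_mul_translation, add_comm]

def translationMatrix (hT : HasIntTranslations Γ) (φ : Γ ≃* Γ) : Matrix (Fin n) (Fin n) ℝ :=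
  Matrix.of fun i j => (φ (translationOf hT (Pi.single j 1)) : Aff n).tr i

lemma translationMatrix_mulVec_single (hT : HasIntTranslations Γ) (φ : Γ ≃* Γ) (j : Fin n) :
    translationMatrix hT φ *ᵥ Pi.single j 1 =
      (φ (translationOf hT (Pi.single j 1)) : Aff n).tr := by
  ext i
  simp [translationMatrix]

lemma translationMatrix_one (hT : HasIntTranslations Γ) : translationMatrix hT 1 = 1 := by
  refine Matrix.ext_of_mulVec_single fun j => ?_
  rw [translationMatrix_mulVec_single, one_mulVec, MulAut.one_apply]
  simp

variable [Fintype (holonomyGroup Γ)]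

lemma lin_pow_card_eq_one (y : Γ) : ((y ^ Fintype.card (holonomyGroup Γ) : Γ) : Aff n).lin = 1 :=
  congrArg Subtype.val ((map_pow (linearPart Γ) y _).trans pow_card_eq_one)

lemma lin_eq_one_iff_forall_commute_pow (hT : HasIntTranslations Γ) (x : Γ) :
    (x : Aff n).lin = 1 ↔ ∀ y : Γ, Commute x (y ^ Fintype.card (holonomyGroup Γ)) := by
  refine ⟨fun hx y => commute_of_lin_eq_one hx (lin_pow_card_eq_one y), fun h => ?_⟩
  refine Units.ext (Matrix.ext_of_mulVec_single fun j => ?_)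
  rw [Units.val_one, one_mulVec]
  have hcomm := congrArg Subtype.val (h (translationOf hT (Pi.single j 1))).eq
  simp only [Subgroup.coe_mul, SubmonoidClass.coe_pow, coe_translationOf,
    Aff.translation_pow] at hcomm
  have hfix := Aff.lin_mulVec_eq_of_commute_translation hcomm
  rw [mulVec_smul] at hfix
  simpa using smul_right_injective (Fin n → ℝ) Fintype.card_ne_zero hfix

lemma lin_map_eq_one (hT : HasIntTranslations Γ) (φ : Γ ≃* Γ) {x : Γ}
    (hx : (x : Aff n).lin = 1) :
    ((φ x : Γ) : Aff n).lin = 1 := by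
  rw [lin_eq_one_iff_forall_commute_pow hT] at hx ⊢
  intro y
  simpa using (hx (φ.symm y)).map φ

lemma map_translationOf (hT : HasIntTranslations Γ) (φ : Γ ≃* Γ) (z : Fin n → ℤ) :
    (φ (translationOf hT z) : Aff n) =
      Aff.translation (translationMatrix hT φ *ᵥ intVec z) := by
  have hlin : ∀ z, (φ (translationOf hT z) : Aff n).lin = 1 := fun z =>
    lin_map_eq_one hT φ (Aff.translation_lin _)
  let f : (Fin n → ℤ) →+ (Fin n → ℝ) :=
    AddMonoidHom.mk' (fun z => (φ (translationOf hT z) : Aff n).tr) fun z w => by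
      have : translationOf hT (z + w) = translationOf hT z * translationOf hT w :=
        Subtype.ext (by simp [Aff.translation_mul_translation])
      simp [this, hlin]
  have hf : f = (mulVecLin (translationMatrix hT φ)).toAddMonoidHom.comp intVec := by
    ext j
    simp [f, translationMatrix]
  exact Aff.ext (DFunLike.congr_fun hf z) (hlin z)

lemma map_eq_translation (hT : HasIntTranslations Γ) (φ : Γ ≃* Γ) {x : Γ}
    (hx : (x : Aff n).lin = 1) :
    (φ x : Aff n) = Aff.translation (translationMatrix hT φ *ᵥ (x : Aff n).tr) := by
  obtain ⟨z, rfl⟩ := exists_eq_translationOf hT hx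
  exact map_translationOf hT φ z

lemma translationMatrix_mul (hT : HasIntTranslations Γ) (φ ψ : Γ ≃* Γ) :
    translationMatrix hT (φ * ψ) = translationMatrix hT φ * translationMatrix hT ψ := by
  refine Matrix.ext_of_mulVec_single fun j => ?_
  rw [translationMatrix_mulVec_single, ← mulVec_mulVec, translationMatrix_mulVec_single,
    MulAut.mul_apply, map_eq_translation hT φ (lin_map_eq_one hT ψ (Aff.translation_lin _))]
  rfl

def translationHom (hT : HasIntTranslations Γ) : MulAut Γ →* GL (Fin n) ℝ :=
  MonoidHom.toHomUnits
    { toFun := translationMatrix hT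
      map_one' := translationMatrix_one hT
      map_mul' := translationMatrix_mul hT }

@[simp] lemma coe_translationHom (hT : HasIntTranslations Γ) (φ : Γ ≃* Γ) :
    (translationHom hT φ : Matrix (Fin n) (Fin n) ℝ) = translationMatrix hT φ := rfl

lemma lin_map (hT : HasIntTranslations Γ) (φ : Γ ≃* Γ) (x : Γ) :
    (φ x : Aff n).lin = translationHom hT φ * (x : Aff n).lin * (translationHom hT φ)⁻¹ := by
  rw [eq_mul_inv_iff_mul_eq]
  refine Units.ext (Matrix.ext_of_mulVec_single fun j => ?_)
  let t := translationOf hT (Pi.single j 1)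
  have hconj : ((x * t * x⁻¹ : Γ) : Aff n) =
      Aff.translation (((x : Aff n).lin : Matrix (Fin n) (Fin n) ℝ) *ᵥ Pi.single j 1) := by
    simp [t, Aff.conj_translation]
  have key := congrArg Aff.tr (map_eq_translation hT φ (x := x * t * x⁻¹) (by rw [hconj]; rfl))
  simp only [map_mul, map_inv, Subgroup.coe_mul, Subgroup.coe_inv, map_translationOf,
    Aff.conj_translation, hconj, Aff.translation_tr, t] at key
  rw [intVec_single, mulVec_mulVec, mulVec_mulVec] at key
  simpa using key

lemma translationHom_mem_normalizer (hT : HasIntTranslations Γ) (φ : Γ ≃* Γ) :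
    IsIntegralGL (translationHom hT φ) ∧ ∀ A : GL (Fin n) ℝ,
      A ∈ holonomy Γ ↔
        translationHom hT φ * A * (translationHom hT φ)⁻¹ ∈ holonomy Γ := by
  have hconj : ∀ φ : Γ ≃* Γ, ∀ A ∈ holonomy Γ,
      translationHom hT φ * A * (translationHom hT φ)⁻¹ ∈ holonomy Γ := by
    rintro φ A ⟨a, ha⟩
    rw [← lin_map hT φ ⟨_, ha⟩]
    exact ⟨_, (φ ⟨_, ha⟩).2⟩
  have hint : ∀ φ : Γ ≃* Γ, ∀ i j, ∃ z : ℤ, translationMatrix hT φ i j = z := by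
    intro φ i j
    obtain ⟨z, hz⟩ := exists_eq_translationOf hT
      (lin_map_eq_one hT φ (x := translationOf hT (Pi.single j 1)) rfl)
    exact ⟨z i, by simp [translationMatrix, hz]⟩
  refine ⟨⟨hint φ, by simpa [← map_inv] using hint φ⁻¹⟩,
    fun A => ⟨hconj φ A, fun h => ?_⟩⟩
  simpa [mul_assoc] using hconj φ⁻¹ _ h

def displacement (ψ : Γ ≃* Γ) (A : holonomyGroup Γ) : Fin n → ℝ :=
  (ψ (rep Γ A) : Aff n).tr - (rep Γ A : Aff n).tr

section TrivialOnTranslations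

variable {hT : HasIntTranslations Γ} {ψ : Γ ≃* Γ} (hψ : translationHom hT ψ = 1)
include hψ

lemma lin_map_of_translationHom_eq_one (x : Γ) : (ψ x : Aff n).lin = (x : Aff n).lin := by
  simp [lin_map hT ψ x, hψ]

lemma map_eq_self_of_translationHom_eq_one {x : Γ} (hx : (x : Aff n).lin = 1) : ψ x = x := by
  have hD : translationMatrix hT ψ = 1 := by simpa using congrArg Units.val hψ
  refine Subtype.ext ?_
  rw [map_eq_translation hT ψ hx, hD, one_mulVec, ← Aff.eq_translation_of_lin_eq_one hx]

lemma tr_map_sub_tr (x : Γ) :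
    (ψ x : Aff n).tr - (x : Aff n).tr = displacement ψ (linearPart Γ x) := by
  set r := rep Γ (linearPart Γ x)
  obtain ⟨t, ht, hx⟩ : ∃ t : Γ, (t : Aff n).lin = 1 ∧ x = t * r :=
    ⟨x * r⁻¹, by simp [r], by group⟩
  conv_lhs => rw [hx, map_mul, map_eq_self_of_translationHom_eq_one hψ ht]
  simp only [Subgroup.coe_mul, Aff.mul_tr, ht, Units.val_one, one_mulVec, displacement]
  abel

lemma displacement_mul (A B : holonomyGroup Γ) :
    displacement ψ (A * B) =
      displacement ψ A +
        ((A : GL (Fin n) ℝ) : Matrix (Fin n) (Fin n) ℝ) *ᵥ displacement ψ B := by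
  have h := tr_map_sub_tr hψ (rep Γ A * rep Γ B)
  rw [map_mul, map_mul, linearPart_rep, linearPart_rep] at h
  simp only [Subgroup.coe_mul, Aff.mul_tr, lin_map_of_translationHom_eq_one hψ, rep_lin] at h
  rw [← h, displacement, displacement, mulVec_sub]
  abel

lemma displacement_mem_range (A : holonomyGroup Γ) :
    displacement ψ A ∈ (intVec (n := n)).range := by
  have hmem : Aff.translation (displacement ψ A) ∈ Γ := by
    rw [displacement, ← Aff.mul_inv_eq_translation (lin_map_of_translationHom_eq_one hψ _)]
    exact Γ.mul_mem (ψ _).2 (Γ.inv_mem (rep Γ A).2)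
  obtain ⟨z, hz⟩ := (hT _).1 hmem
  exact ⟨z, hz.symm⟩

lemma card_smul_displacement (A : holonomyGroup Γ) :
    Fintype.card (holonomyGroup Γ) • displacement ψ A =
      ∑ B, displacement ψ B -
        ((A : GL (Fin n) ℝ) : Matrix (Fin n) (Fin n) ℝ) *ᵥ ∑ B, displacement ψ B := by
  have h := Equiv.sum_comp (Equiv.mulLeft A) (displacement ψ)
  simp only [Equiv.coe_mulLeft, displacement_mul hψ, Finset.sum_add_distrib, Finset.sum_const,
    Finset.card_univ, ← mulVec_sum] at h
  exact eq_sub_of_add_eq h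

lemma eq_conj_of_sum_displacement (u : Fin n → ℤ)
    (hu : ∑ B, displacement ψ B = Fintype.card (holonomyGroup Γ) • intVec u) (x : Γ) :
    ψ x = translationOf hT u * x * (translationOf hT u)⁻¹ := by
  have hdisp : displacement ψ (linearPart Γ x) =
      intVec u - ((x : Aff n).lin : Matrix (Fin n) (Fin n) ℝ) *ᵥ intVec u := by
    have h := card_smul_displacement hψ (linearPart Γ x)
    rw [hu, mulVec_smul, ← smul_sub] at h
    exact smul_right_injective (Fin n → ℝ) Fintype.card_ne_zero h
  refine Subtype.ext ?_
  simp only [Subgroup.coe_mul, Subgroup.coe_inv, coe_translationOf, Aff.translation_conj]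
  refine Aff.ext ?_ (lin_map_of_translationHom_eq_one hψ x)
  rw [eq_add_of_sub_eq' (tr_map_sub_tr hψ x), hdisp]
  dsimp only
  abel

end TrivialOnTranslations

def translationSum (φ : Γ ≃* Γ) : Fin n → ℝ := ∑ A, (φ (rep Γ A) : Aff n).tr

lemma translationSum_mul_sub (hT : HasIntTranslations Γ) (φ : Γ ≃* Γ) {ψ : Γ ≃* Γ}
    (hψ : translationHom hT ψ = 1) :
    translationSum (ψ * φ) - translationSum φ = ∑ A, displacement ψ A := by
  have hbij : Function.Bijective fun A => linearPart Γ (φ (rep Γ A)) := by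
    refine Finite.injective_iff_bijective.mp fun A B h => Subtype.ext ?_
    simpa [lin_map hT φ] using congrArg Subtype.val h
  rw [translationSum, translationSum, ← Finset.sum_sub_distrib,
    ← hbij.sum_comp (displacement ψ)]
  exact Finset.sum_congr rfl fun A _ => tr_map_sub_tr hψ _

def autInvariant (hT : HasIntTranslations Γ) (φ : Γ ≃* Γ) :
    GL (Fin n) ℝ × (Fin n → ℝ) ⧸ scaledIntLattice (Fintype.card (holonomyGroup Γ)) :=
  (translationHom hT φ, translationSum φ)

lemma finite_range_autInvariant (hT : HasIntTranslations Γ)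
    (hN : {D : GL (Fin n) ℝ | IsIntegralGL D ∧
      ∀ A : GL (Fin n) ℝ, A ∈ holonomy Γ ↔ D * A * D⁻¹ ∈ holonomy Γ}.Finite) :
    (Set.range (autInvariant hT)).Finite := by
  refine Set.Finite.of_finite_fibers Prod.fst (hN.subset ?_) ?_
  · rintro _ ⟨_, ⟨φ, rfl⟩, rfl⟩
    exact translationHom_mem_normalizer hT φ
  rintro _ ⟨_, ⟨φ₀, rfl⟩, rfl⟩
  refine ((finite_range_mk_add_intVec _ (translationSum φ₀)).image
    (Prod.mk (translationHom hT φ₀))).subset ?_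
  rintro _ ⟨⟨φ, rfl⟩, hD⟩
  have hψ : translationHom hT (φ * φ₀⁻¹) = 1 := by
    rw [map_mul, map_inv, mul_inv_eq_one]
    exact hD
  obtain ⟨w, hw⟩ := AddSubgroup.sum_mem _ (t := .univ) fun A _ => displacement_mem_range hψ A
  refine ⟨_, ⟨w, rfl⟩, Prod.ext hD.symm ?_⟩
  have h := translationSum_mul_sub hT φ₀ hψ
  rw [inv_mul_cancel_right] at h
  change QuotientAddGroup.mk (translationSum φ₀ + intVec w) =
    QuotientAddGroup.mk (translationSum φ)
  rw [hw, ← h, add_sub_cancel]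

lemma exists_forall_eq_conj_of_autInvariant_eq (hT : HasIntTranslations Γ) {φ φ' : Γ ≃* Γ}
    (h : autInvariant hT φ = autInvariant hT φ') : ∃ g, ∀ x, φ' x = g * φ x * g⁻¹ := by
  have hψ : translationHom hT (φ' * φ⁻¹) = 1 := by
    rw [map_mul, map_inv, mul_inv_eq_one]
    exact (congrArg Prod.fst h).symm
  have hsum := translationSum_mul_sub hT φ hψ
  rw [inv_mul_cancel_right] at hsum
  obtain ⟨u, hu⟩ := QuotientAddGroup.eq_iff_sub_mem.1 (congrArg Prod.snd h).symm
  refine ⟨translationOf hT u, fun x => ?_⟩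
  rw [← eq_conj_of_sum_displacement hψ u (hsum ▸ hu.symm)]
  simp

end Crystallographic

/-- If the normaliser of the holonomy group `F` of a crystallographic group `Γ` in
`GLₙ(ℤ)` is finite, then the Reidemeister spectrum of `Γ` is finite. -/
theorem stmt11 {n : ℕ} (Γ : Subgroup (Aff n)) (hΓ : IsCrystallographic Γ)
    (hN : {D : GL (Fin n) ℝ | IsIntegralGL D ∧
      ∀ A : GL (Fin n) ℝ, A ∈ holonomy Γ ↔ D * A * D⁻¹ ∈ holonomy Γ}.Finite) :
    (reidemeisterSpectrum ↥Γ).Finite := by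
  have : Finite (Crystallographic.holonomyGroup Γ) := hΓ.2.1.to_subtype
  have := Fintype.ofFinite (Crystallographic.holonomyGroup Γ)
  exact reidemeisterSpectrum_finite_of_invariant (Crystallographic.autInvariant hΓ.1)
    (Crystallographic.finite_range_autInvariant hΓ.1 hN)
    fun _ _ => Crystallographic.exists_forall_eq_conj_of_autInvariant_eq hΓ.1
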